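/- arXiv:2312.13613 — 4 statements merged into one kernel-verified Lean document; each statement's English description precedes it below -/
import Mathlib

section
/- For every positive integer n, the integer n − 1 divides T_{n+1} − 3·T_n. -/
open Finset

/-- The integer value of C(2k,k)/(2k-1): equals -1 at k = 0 and 2*Catalan(k-1) for k >= 1. -/
def c (k : ℕ) : ℤ := if k = 0 then -1 else 2 * (catalan (k - 1) : ℤ)

/-- W n = ∑_{k=0}^{⌊n/2⌋} C(n,2k) * C(2k,k)/(2k-1). -/
def W (n : ℕ) : ℤ := ∑ k ∈ Finset.range (n / 2 + 1), (n.choose (2 * k) : ℤ) * c k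

/-- The n-th central trinomial coefficient T n = ∑_{l=0}^{⌊n/2⌋} C(n,2l) * C(2l,l). -/
def T (n : ℕ) : ℤ := ∑ l ∈ Finset.range (n / 2 + 1), (n.choose (2 * l) : ℤ) * ((2 * l).choose l : ℤ)

instance fact_prime_3 : Fact (Nat.Prime 3) := ⟨by norm_num⟩

/-- Extend the defining sum of `T` to any sufficiently large range. -/
lemma T_eq_sum (m N : ℕ) (h : m / 2 + 1 ≤ N) :
    T m = ∑ l ∈ Finset.range N, (m.choose (2 * l) : ℤ) * ((2 * l).choose l : ℤ) := by
  rw [T]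
  refine Finset.sum_subset (Finset.range_subset_range.2 h) ?_
  intro l hl hl2
  have hl3 : m / 2 + 1 ≤ l := by
    by_contra hc
    exact hl2 (Finset.mem_range.2 (by omega))
  have hlt : m < 2 * l := by omega
  rw [Nat.choose_eq_zero_of_lt hlt]
  simp

/-- Central binomial coefficient in terms of Catalan numbers, cast to ℤ. -/
lemma centralBinom_eq_catalan (j : ℕ) :
    (((2 * j + 2).choose (j + 1) : ℕ) : ℤ) = 2 * (2 * (j : ℤ) + 1) * (catalan j : ℤ) := by
  have hc : Nat.centralBinom (j + 1) = (2 * j + 2).choose (j + 1) := by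
    rw [Nat.centralBinom_eq_two_mul_choose, Nat.mul_succ]
  have h1' : ((j : ℤ) + 1) * (Nat.centralBinom (j + 1) : ℤ)
      = 2 * (2 * (j : ℤ) + 1) * (Nat.centralBinom j : ℤ) := by
    exact_mod_cast Nat.succ_mul_centralBinom_succ j
  have h2' : ((j : ℤ) + 1) * (catalan j : ℤ) = (Nat.centralBinom j : ℤ) := by
    exact_mod_cast succ_mul_catalan_eq_centralBinom j
  apply mul_left_cancel₀ (show ((j : ℤ) + 1) ≠ 0 by positivity)
  rw [show ((2 * j + 2).choose (j + 1)) = Nat.centralBinom (j + 1) from hc.symm]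
  linear_combination h1' - 2 * (2 * (j : ℤ) + 1) * h2'

/-- The key per-term identity for the main sum. -/
lemma key1 (m j : ℕ) :
    (((m + 3).choose (2 * (j + 1)) : ℤ) - 3 * ((m + 2).choose (2 * (j + 1)) : ℤ))
        * (((2 * (j + 1)).choose (j + 1) : ℕ) : ℤ)
    = ((m : ℤ) + 1) * (2 * (catalan j : ℤ)
        * (((m + 2).choose (2 * j + 1) : ℤ) - 3 * ((m + 1).choose (2 * j + 1) : ℤ)))
      + (2 * (catalan j : ℤ) * ((m + 1).choose (2 * j) : ℤ)
      + 4 * (catalan j : ℤ) * ((m + 1).choose (2 * j + 2) : ℤ)) := by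
  have h2j : 2 * (j + 1) = 2 * j + 2 := by ring
  rw [h2j]
  have e1 : (((2 * j + 2).choose (j + 1) : ℕ) : ℤ) = 2 * (2 * (j : ℤ) + 1) * (catalan j : ℤ) :=
    centralBinom_eq_catalan j
  have e2 : ((m : ℤ) + 3) * ((m + 2).choose (2 * j + 1) : ℤ)
      = ((m + 3).choose (2 * j + 2) : ℤ) * (2 * (j : ℤ) + 2) := by
    exact_mod_cast Nat.add_one_mul_choose_eq (m + 2) (2 * j + 1)
  have e3 : ((m : ℤ) + 2) * ((m + 1).choose (2 * j + 1) : ℤ)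
      = ((m + 2).choose (2 * j + 2) : ℤ) * (2 * (j : ℤ) + 2) := by
    exact_mod_cast Nat.add_one_mul_choose_eq (m + 1) (2 * j + 1)
  have e4 : ((m + 3).choose (2 * j + 2) : ℤ)
      = ((m + 2).choose (2 * j + 1) : ℤ) + ((m + 2).choose (2 * j + 2) : ℤ) := by
    exact_mod_cast Nat.choose_succ_succ (m + 2) (2 * j + 1)
  have e5 : ((m + 2).choose (2 * j + 2) : ℤ)
      = ((m + 1).choose (2 * j + 1) : ℤ) + ((m + 1).choose (2 * j + 2) : ℤ) := by
    exact_mod_cast Nat.choose_succ_succ (m + 1) (2 * j + 1)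
  have e6 : ((m + 2).choose (2 * j + 1) : ℤ)
      = ((m + 1).choose (2 * j) : ℤ) + ((m + 1).choose (2 * j + 1) : ℤ) := by
    exact_mod_cast Nat.choose_succ_succ (m + 1) (2 * j)
  linear_combination
    (((m + 3).choose (2 * j + 2) : ℤ) - 3 * ((m + 2).choose (2 * j + 2) : ℤ)) * e1
    + 2 * (catalan j : ℤ) * (-e2 + 3 * e3 - e4 + 2 * e5 + e6)

/-- The per-term identity showing the divisibility of the leftover sum. -/
lemma key2 (m j : ℕ) :
    2 * (catalan (j + 1) : ℤ) * ((m + 1).choose (2 * (j + 1)) : ℤ)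
      + 4 * (catalan j : ℤ) * ((m + 1).choose (2 * j + 2) : ℤ)
    = ((m : ℤ) + 1) * ((4 * (catalan j : ℤ) - (catalan (j + 1) : ℤ))
        * (m.choose (2 * j + 1) : ℤ)) := by
  have h2j : 2 * (j + 1) = 2 * j + 2 := by ring
  rw [h2j]
  have e : ((m : ℤ) + 1) * (m.choose (2 * j + 1) : ℤ)
      = ((m + 1).choose (2 * j + 2) : ℤ) * (2 * (j : ℤ) + 2) := by
    exact_mod_cast Nat.add_one_mul_choose_eq m (2 * j + 1)
  have f : ((j : ℤ) + 2) * (catalan (j + 1) : ℤ) = 2 * (2 * (j : ℤ) + 1) * (catalan j : ℤ) := by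
    have h3' : ((j : ℤ) + 2) * (catalan (j + 1) : ℤ) = (Nat.centralBinom (j + 1) : ℤ) := by
      exact_mod_cast succ_mul_catalan_eq_centralBinom (j + 1)
    have hc : Nat.centralBinom (j + 1) = (2 * j + 2).choose (j + 1) := by
      rw [Nat.centralBinom_eq_two_mul_choose, Nat.mul_succ]
    rw [h3', hc]
    exact centralBinom_eq_catalan j
  apply mul_left_cancel₀ (show ((j : ℤ) + 2) ≠ 0 by positivity)
  linear_combination
    (2 * ((m + 1).choose (2 * j + 2) : ℤ) + ((m : ℤ) + 1) * (m.choose (2 * j + 1) : ℤ)) * f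
    - 6 * (catalan j : ℤ) * e

theorem stmt_15 (n : ℕ) (hn : 0 < n) :
    ((n : ℤ) - 1) ∣ T (n + 1) - 3 * T n := by
  rcases eq_or_lt_of_le (Nat.succ_le_of_lt hn) with h1 | h2
  · -- n = 1 : the difference is 0
    have hn1 : n = 1 := h1.symm
    subst hn1
    norm_num [T, Finset.sum_range_succ]
  · -- n ≥ 2
    obtain ⟨m, rfl⟩ : ∃ m, n = m + 2 := ⟨n - 2, by omega⟩
    have hgoal : ((m : ℤ) + 2 : ℤ) - 1 = (m : ℤ) + 1 := by ring
    push_cast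
    rw [hgoal]
    set K := (m + 2) / 2 with hK
    have hK1 : 1 ≤ K := by omega
    have h1 : T (m + 2 + 1)
        = ∑ l ∈ Finset.range (K + 2), ((m + 3).choose (2 * l) : ℤ) * ((2 * l).choose l : ℤ) := by
      have := T_eq_sum (m + 3) (K + 2) (by omega)
      simpa using this
    have h2 : T (m + 2)
        = ∑ l ∈ Finset.range (K + 2), ((m + 2).choose (2 * l) : ℤ) * ((2 * l).choose l : ℤ) :=
      T_eq_sum (m + 2) (K + 2) (by omega)
    have h3 : T (m + 2 + 1) - 3 * T (m + 2)
        = ∑ l ∈ Finset.range (K + 2),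
            (((m + 3).choose (2 * l) : ℤ) - 3 * ((m + 2).choose (2 * l) : ℤ))
              * ((2 * l).choose l : ℤ) := by
      rw [h1, h2, Finset.mul_sum, ← Finset.sum_sub_distrib]
      exact Finset.sum_congr rfl fun l _ => by ring
    rw [h3]
    rw [show (K + 2) = (K + 1) + 1 from rfl,
      Finset.sum_range_succ' (fun l => (((m + 3).choose (2 * l) : ℤ)
        - 3 * ((m + 2).choose (2 * l) : ℤ)) * ((2 * l).choose l : ℤ)) (K + 1)]
    have hzero : (((m + 3).choose (2 * 0) : ℤ) - 3 * ((m + 2).choose (2 * 0) : ℤ))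
        * ((2 * 0).choose 0 : ℤ) = -2 := by norm_num
    rw [hzero]
    have hsplit : ∑ j ∈ Finset.range (K + 1),
        (((m + 3).choose (2 * (j + 1)) : ℤ) - 3 * ((m + 2).choose (2 * (j + 1)) : ℤ))
          * ((2 * (j + 1)).choose (j + 1) : ℤ)
        = (∑ j ∈ Finset.range (K + 1), ((m : ℤ) + 1) * (2 * (catalan j : ℤ)
            * (((m + 2).choose (2 * j + 1) : ℤ) - 3 * ((m + 1).choose (2 * j + 1) : ℤ))))
          + ((∑ j ∈ Finset.range (K + 1), 2 * (catalan j : ℤ) * ((m + 1).choose (2 * j) : ℤ))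
          + (∑ j ∈ Finset.range (K + 1),
              4 * (catalan j : ℤ) * ((m + 1).choose (2 * j + 2) : ℤ))) := by
      rw [← Finset.sum_add_distrib, ← Finset.sum_add_distrib]
      exact Finset.sum_congr rfl fun j _ => key1 m j
    rw [hsplit]
    have hA : (∑ j ∈ Finset.range (K + 1), 2 * (catalan j : ℤ) * ((m + 1).choose (2 * j) : ℤ))
        = (∑ j ∈ Finset.range K,
            2 * (catalan (j + 1) : ℤ) * ((m + 1).choose (2 * (j + 1)) : ℤ)) + 2 := by
      rw [Finset.sum_range_succ' (fun j => 2 * (catalan j : ℤ) * ((m + 1).choose (2 * j) : ℤ)) K]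
      norm_num
    have hB : (∑ j ∈ Finset.range (K + 1),
          4 * (catalan j : ℤ) * ((m + 1).choose (2 * j + 2) : ℤ))
        = ∑ j ∈ Finset.range K, 4 * (catalan j : ℤ) * ((m + 1).choose (2 * j + 2) : ℤ) := by
      rw [Finset.sum_range_succ]
      have hlt : m + 1 < 2 * K + 2 := by omega
      rw [Nat.choose_eq_zero_of_lt hlt]
      norm_num
    rw [hA, hB]
    have hAB : (∑ j ∈ Finset.range K,
          2 * (catalan (j + 1) : ℤ) * ((m + 1).choose (2 * (j + 1)) : ℤ))
        + (∑ j ∈ Finset.range K, 4 * (catalan j : ℤ) * ((m + 1).choose (2 * j + 2) : ℤ))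
        = ∑ j ∈ Finset.range K, ((m : ℤ) + 1) * ((4 * (catalan j : ℤ) - (catalan (j + 1) : ℤ))
            * (m.choose (2 * j + 1) : ℤ)) := by
      rw [← Finset.sum_add_distrib]
      exact Finset.sum_congr rfl fun j _ => key2 m j
    have hfin : ∀ S1 SA SB SC : ℤ, SA + SB = SC →
        S1 + ((SA + 2) + SB) + (-2) = S1 + SC := by
      intro S1 SA SB SC h
      rw [← h]; ring
    rw [hfin _ _ _ _ hAB]
    exact dvd_add (Finset.dvd_sum fun j _ => dvd_mul_right _ _)
      (Finset.dvd_sum fun j _ => dvd_mul_right _ _)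
end

section
/- For every integer n ≥ 2, (n+1)·(T_{n+1} − 3T_n) = 3(n−1)·(T_{n-1} − 3T_{n-2}) + 2(n−1)·(T_n − 3T_{n-1}). -/
open Finset

/-- Summand of T. -/
def Fz (n k : ℕ) : ℤ := (n.choose (2 * k) : ℤ) * ((2 * k).choose k : ℤ)

/-- Zeilberger certificate function. -/
def gz (n k : ℕ) : ℤ := -2 * k * ((n + 1).choose (2 * k - 1) : ℤ) * ((2 * k).choose k : ℤ)

lemma hrel (m j : ℕ) : ((j : ℤ) + 1) * (m.choose (j + 1) : ℤ) = ((m : ℤ) - j) * (m.choose j : ℤ) := by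
  rcases le_or_gt j m with h | h
  · have h0 := Nat.choose_succ_right_eq m j
    have h1 := congrArg (Nat.cast : ℕ → ℤ) h0
    push_cast [Nat.cast_sub h] at h1
    linarith
  · rw [Nat.choose_eq_zero_of_lt h, Nat.choose_eq_zero_of_lt (h.trans (Nat.lt_succ_self j))]
    ring

lemma hrel2 (m j : ℕ) : ((m : ℤ) + 1 - j) * ((m + 1).choose j : ℤ) = ((m : ℤ) + 1) * (m.choose j : ℤ) := by
  rcases le_or_gt j (m + 1) with h | h
  · have h0 := Nat.choose_mul_succ_eq m j
    have h1 := congrArg (Nat.cast : ℕ → ℤ) h0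
    push_cast [Nat.cast_sub h] at h1
    linarith
  · rw [Nat.choose_eq_zero_of_lt h, Nat.choose_eq_zero_of_lt (by omega : m < j)]
    ring

lemma hr4 (k : ℕ) : ((k : ℤ) + 1) * ((2 * k + 2).choose (k + 1) : ℤ)
    = 2 * (2 * (k : ℤ) + 1) * ((2 * k).choose k : ℤ) := by
  have h0 := Nat.succ_mul_centralBinom_succ k
  simp only [Nat.centralBinom] at h0
  have h2 : 2 * (k + 1) = 2 * k + 2 := by ring
  rw [h2] at h0
  have h1 := congrArg (Nat.cast : ℕ → ℤ) h0
  push_cast at h1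
  linarith

lemma ptw (n k : ℕ) :
    ((n : ℤ) + 2) * Fz (n + 2) k - (2 * (n : ℤ) + 3) * Fz (n + 1) k - 3 * ((n : ℤ) + 1) * Fz n k
      = gz n (k + 1) - gz n k := by
  cases k with
  | zero =>
      simp only [Fz, gz, Nat.mul_zero, Nat.choose_zero_right, Nat.choose_self]
      norm_num
      ring
  | succ k =>
      have hp : ((n + 2).choose (2 * k + 2) : ℤ)
          = ((n + 1).choose (2 * k + 1) : ℤ) + ((n + 1).choose (2 * k + 2) : ℤ) := by
        exact_mod_cast congrArg Nat.cast (Nat.choose_succ_succ (n + 1) (2 * k + 1))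
      have h1 := hrel (n + 1) (2 * k + 1)
      have h2 := hrel (n + 1) (2 * k + 2)
      have h3 := hrel2 n (2 * k + 2)
      have h4 := hr4 (k + 1)
      rw [show 2 * k + 1 + 1 = 2 * k + 2 by ring] at h1
      rw [show 2 * k + 2 + 1 = 2 * k + 3 by ring] at h2
      rw [show 2 * (k + 1) + 2 = 2 * k + 4 by ring, show 2 * (k + 1) = 2 * k + 2 by ring,
        show k + 1 + 1 = k + 2 by ring] at h4
      have hK : ((k : ℤ) + 1 + 1) ≠ 0 := by positivity
      apply mul_left_cancel₀ hK
      simp only [Fz, gz]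
      rw [show 2 * (k + 1) - 1 = 2 * k + 1 by omega,
        show 2 * (k + 1 + 1) - 1 = 2 * k + 3 by omega,
        show 2 * (k + 1 + 1) = 2 * k + 4 by ring,
        show 2 * (k + 1) = 2 * k + 2 by ring,
        show k + 1 + 1 = k + 2 by ring]
      push_cast at h1 h2 h3 h4 hp ⊢
      linear_combination
        (((k : ℤ) + 2) * ((n : ℤ) + 2) * ((2 * k + 2).choose (k + 1) : ℤ)) * hp
        + (2 * ((k : ℤ) + 2) * (((n + 1).choose (2 * k + 3) : ℤ))) * h4
        + (4 * ((k : ℤ) + 2) * ((2 * k + 2).choose (k + 1) : ℤ)) * h2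
        - (((k : ℤ) + 2) * ((2 * k + 2).choose (k + 1) : ℤ)) * h1
        + (3 * ((k : ℤ) + 2) * ((2 * k + 2).choose (k + 1) : ℤ)) * h3

lemma Fz_zero {n k : ℕ} (h : n < 2 * k) : Fz n k = 0 := by
  simp [Fz, Nat.choose_eq_zero_of_lt h]

lemma Tsum (n : ℕ) : T n = ∑ k ∈ Finset.range (n + 1), Fz n k := by
  unfold T
  refine Finset.sum_subset ?_ ?_
  · exact Finset.range_subset_range.2 (by omega)
  · intro k _ hk
    simp only [Finset.mem_range, not_lt] at hk
    have : n < 2 * k := by omega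
    simp [Nat.choose_eq_zero_of_lt this]

lemma Trec (n : ℕ) : ((n : ℤ) + 2) * T (n + 2)
    = (2 * (n : ℤ) + 3) * T (n + 1) + 3 * ((n : ℤ) + 1) * T n := by
  have h1 : T (n + 2) = ∑ k ∈ Finset.range (n + 3), Fz (n + 2) k := Tsum (n + 2)
  have h2 : T (n + 1) = ∑ k ∈ Finset.range (n + 3), Fz (n + 1) k := by
    rw [Tsum (n + 1)]
    have e : ∑ k ∈ Finset.range (n + 3), Fz (n + 1) k
        = ∑ k ∈ Finset.range (n + 2), Fz (n + 1) k + Fz (n + 1) (n + 2) :=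
      Finset.sum_range_succ _ _
    rw [e, Fz_zero (by omega), add_zero]
  have h3 : T n = ∑ k ∈ Finset.range (n + 3), Fz n k := by
    rw [Tsum n]
    have e1 : ∑ k ∈ Finset.range (n + 3), Fz n k
        = ∑ k ∈ Finset.range (n + 2), Fz n k + Fz n (n + 2) := Finset.sum_range_succ _ _
    have e2 : ∑ k ∈ Finset.range (n + 2), Fz n k
        = ∑ k ∈ Finset.range (n + 1), Fz n k + Fz n (n + 1) := Finset.sum_range_succ _ _
    rw [e1, e2, Fz_zero (n := n) (k := n + 1) (by omega),
      Fz_zero (n := n) (k := n + 2) (by omega), add_zero, add_zero]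
  have key : ∑ k ∈ Finset.range (n + 3),
      (((n : ℤ) + 2) * Fz (n + 2) k - (2 * (n : ℤ) + 3) * Fz (n + 1) k
        - 3 * ((n : ℤ) + 1) * Fz n k) = 0 := by
    rw [Finset.sum_congr rfl (fun k _ => ptw n k), Finset.sum_range_sub (gz n)]
    have hz1 : gz n (n + 3) = 0 := by
      simp [gz, Nat.choose_eq_zero_of_lt (show n + 1 < 2 * (n + 3) - 1 by omega)]
    have hz0 : gz n 0 = 0 := by simp [gz]
    rw [hz1, hz0, sub_zero]
  rw [h1, h2, h3, Finset.mul_sum, Finset.mul_sum, Finset.mul_sum]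
  have expand : ∑ k ∈ Finset.range (n + 3),
      (((n : ℤ) + 2) * Fz (n + 2) k - (2 * (n : ℤ) + 3) * Fz (n + 1) k
        - 3 * ((n : ℤ) + 1) * Fz n k)
    = ∑ k ∈ Finset.range (n + 3), ((n : ℤ) + 2) * Fz (n + 2) k
      - ∑ k ∈ Finset.range (n + 3), (2 * (n : ℤ) + 3) * Fz (n + 1) k
      - ∑ k ∈ Finset.range (n + 3), 3 * ((n : ℤ) + 1) * Fz n k := by
    rw [Finset.sum_sub_distrib, Finset.sum_sub_distrib]
  rw [expand] at key
  linarith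

theorem stmt_16 (n : ℕ) (hn : 2 ≤ n) :
    ((n : ℤ) + 1) * (T (n + 1) - 3 * T n) =
      3 * ((n : ℤ) - 1) * (T (n - 1) - 3 * T (n - 2))
        + 2 * ((n : ℤ) - 1) * (T n - 3 * T (n - 1)) := by
  obtain ⟨m, rfl⟩ : ∃ m, n = m + 2 := ⟨n - 2, by omega⟩
  have e1 : m + 2 - 1 = m + 1 := by omega
  have e2 : m + 2 - 2 = m := by omega
  rw [e1, e2, show m + 2 + 1 = m + 1 + 2 by ring]
  have r1 := Trec (m + 1)
  have r2 := Trec m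
  push_cast at r1 r2 ⊢
  linear_combination r1 - 3 * r2
end

section
/- For every prime p > 3, T_p ≡ 1 (mod p²). -/
open Finset

open Polynomial AdjoinRoot in
theorem stmt_17 (p : ℕ) [Fact p.Prime] (hp : 3 < p) :
    T p ≡ 1 [ZMOD ((p : ℤ) ^ 2)] := by
  have hprime : p.Prime := Fact.out
  have hodd : Odd p := hprime.odd_of_ne_two (by omega)
  have h3 : p % 3 = 1 ∨ p % 3 = 2 := by
    have hnd : ¬ (3 ∣ p) := fun h => by
      have := (Nat.prime_dvd_prime_iff_eq (by norm_num) hprime).mp h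
      omega
    omega
  haveI : Fact (1 < p ^ 2) := ⟨by nlinarith⟩
  set R := ZMod (p ^ 2) with hR
  have hg : (X ^ 2 + X + 1 : R[X]).Monic := by monicity!
  have hdeg : (X ^ 2 + X + 1 : R[X]).degree = 2 := by compute_degree!
  set S := AdjoinRoot (X ^ 2 + X + 1 : R[X]) with hS
  set ω : S := root _ with hω
  have hroot : ω ^ 2 + ω + 1 = 0 := by
    have := AdjoinRoot.eval₂_root (X ^ 2 + X + 1 : R[X])
    simpa using this
  -- injectivity of the base ring into S
  have hinj : Function.Injective (algebraMap R S) := by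
    intro a b hab
    have h1 : AdjoinRoot.mk _ (Polynomial.C a) = AdjoinRoot.mk _ (Polynomial.C b) := hab
    have h2 := congrArg (AdjoinRoot.modByMonicHom hg) h1
    rw [AdjoinRoot.modByMonicHom_mk, AdjoinRoot.modByMonicHom_mk,
      (Polynomial.modByMonic_eq_self_iff hg).mpr
        (by rw [hdeg]; exact lt_of_le_of_lt (degree_C_le) (by norm_num)),
      (Polynomial.modByMonic_eq_self_iff hg).mpr
        (by rw [hdeg]; exact lt_of_le_of_lt (degree_C_le) (by norm_num))] at h2
    exact Polynomial.C_injective h2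
  -- p² = 0 in S
  have hp2 : (p : S) ^ 2 = 0 := by
    have h0 : ((p ^ 2 : ℕ) : S) = 0 := by
      rw [← map_natCast (algebraMap R S), ZMod.natCast_self, map_zero]
    push_cast at h0
    exact h0
  -- ω is a primitive cube root of unity
  have hmul : ω ^ 3 = 1 := by linear_combination (ω - 1) * hroot
  have homega : ω ^ p + ω ^ (2 * p) = -1 := by
    have key : ∀ n : ℕ, ω ^ n = ω ^ (n % 3) := by
      intro n
      conv_lhs => rw [← Nat.div_add_mod n 3]
      rw [pow_add, pow_mul, hmul, one_pow, one_mul]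
    rcases h3 with h | h
    · rw [key p, key (2 * p), h, (by omega : 2 * p % 3 = 2)]
      linear_combination hroot
    · rw [key p, key (2 * p), h, (by omega : 2 * p % 3 = 1)]
      linear_combination hroot
  -- factorization over S
  have hfact : (X ^ 2 + X + 1 : S[X]) = (X + Polynomial.C (-ω)) * (X + Polynomial.C (-ω ^ 2)) := by
    have h1 : (X + Polynomial.C (-ω)) * (X + Polynomial.C (-ω ^ 2))
        = X ^ 2 + (Polynomial.C (-ω) + Polynomial.C (-ω ^ 2)) * X
          + Polynomial.C (-ω) * Polynomial.C (-ω ^ 2) := by ring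
    rw [h1, ← Polynomial.C_add, ← Polynomial.C_mul,
      show (-ω) + (-ω ^ 2) = 1 by linear_combination -hroot,
      show (-ω) * (-ω ^ 2) = 1 by linear_combination (ω - 1) * hroot]
    simp
  -- the coefficient of X^p computed from the factorization
  have hc1 : (((X ^ 2 + X + 1 : S[X])) ^ p).coeff p = -(ω ^ p) + -(ω ^ (2 * p)) := by
    rw [hfact, mul_pow, Polynomial.coeff_mul,
      Finset.Nat.sum_antidiagonal_eq_sum_range_succ_mk]
    have hterm : ∀ i ∈ Finset.range (p + 1),
        ((X + Polynomial.C (-ω)) ^ p).coeff i * ((X + Polynomial.C (-ω ^ 2)) ^ p).coeff (p - i)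
        = (if i = 0 then -(ω ^ p) else 0) + (if i = p then -(ω ^ (2 * p)) else 0) := by
      intro i hi
      rw [Finset.mem_range] at hi
      rw [coeff_X_add_C_pow, coeff_X_add_C_pow]
      rcases eq_or_ne i 0 with rfl | h0
      · rw [if_pos rfl, if_neg (by omega : ¬ (0 : ℕ) = p)]
        simp [hodd.neg_pow]
      · rcases eq_or_ne i p with rfl | hip
        · simp [hodd.neg_pow, pow_mul, h0]
        · have hlt : i < p := by omega
          obtain ⟨t, ht⟩ := hprime.dvd_choose_self h0 hlt
          have hsym : p.choose (p - i) = p.choose i := Nat.choose_symm hlt.le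
          have hzero : ((p.choose i : S)) * ((p.choose (p - i) : S)) = 0 := by
            rw [hsym, ht]
            push_cast
            calc ((p * t : ℕ) : S) * ((p * t : ℕ) : S) = (p : S) ^ 2 * (t * t) := by rw [show ((p * t : ℕ) : S) = (p : S) * (t : S) from Nat.cast_mul (α := S) p t]; ring
            _ = 0 := by rw [hp2, zero_mul]
          calc ((-ω) ^ (p - i) * (p.choose i : S))
                * ((-ω ^ 2) ^ (p - (p - i)) * (p.choose (p - i) : S))
              = ((p.choose i : S) * (p.choose (p - i) : S))
                * ((-ω) ^ (p - i) * (-ω ^ 2) ^ (p - (p - i))) := by ring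
            _ = 0 := by rw [hzero, zero_mul]
            _ = _ := by simp [h0, hip]
    rw [Finset.sum_congr rfl hterm, Finset.sum_add_distrib]
    simp
  -- the coefficient of X^p computed from the binomial expansion
  have hc2 : (((X ^ 2 + X + 1 : S[X])) ^ p).coeff p
      = ∑ l ∈ Finset.range (p / 2 + 1), (p.choose l : S) * ((p - l).choose l : S) := by
    have h1 : (X ^ 2 + X + 1 : S[X]) = X ^ 2 + (X + 1) := by ring
    rw [h1, add_pow, Polynomial.finset_sum_coeff]
    have hterm : ∀ k ∈ Finset.range (p + 1),
        ((X ^ 2 : S[X]) ^ k * (X + 1) ^ (p - k) * (p.choose k : S[X])).coeff p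
        = if k ∈ Finset.range (p / 2 + 1) then (p.choose k : S) * ((p - k).choose k : S)
          else 0 := by
      intro k hk
      rw [Finset.mem_range] at hk
      rw [← Polynomial.C_eq_natCast, Polynomial.coeff_mul_C, ← pow_mul,
        Polynomial.coeff_X_pow_mul', Polynomial.coeff_X_add_one_pow]
      by_cases h2k : 2 * k ≤ p
      · rw [if_pos h2k, if_pos (Finset.mem_range.mpr (by omega))]
        have hps : p - 2 * k = (p - k) - k := by omega
        rw [hps, Nat.choose_symm (by omega : k ≤ p - k), mul_comm]
      · rw [if_neg h2k, if_neg (by rw [Finset.mem_range]; omega), zero_mul]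
    rw [Finset.sum_congr rfl hterm]
    rw [Finset.sum_ite_mem, Finset.inter_eq_right.mpr (Finset.range_subset_range.mpr (by omega))]
  -- T p in S equals 1
  have hTS : ((T p : ℤ) : S) = 1 := by
    rw [T]
    rw [Int.cast_sum]
    simp only [Int.cast_mul, Int.cast_natCast]
    have hident : ∀ l ∈ Finset.range (p / 2 + 1),
        ((p.choose (2 * l) : S)) * (((2 * l).choose l : S))
        = (p.choose l : S) * ((p - l).choose l : S) := by
      intro l hl
      rw [Finset.mem_range] at hl
      have h2l : 2 * l ≤ p := by omega
      have := Nat.choose_mul (n := p) (by omega : l ≤ 2 * l)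
      rw [(by omega : 2 * l - l = l)] at this
      exact (Nat.cast_mul _ _).symm.trans ((congrArg (Nat.cast : ℕ → S) this).trans (Nat.cast_mul _ _))
    rw [Finset.sum_congr rfl hident, ← hc2, hc1]
    linear_combination -homega
  -- pull back along the injection
  have hfin : ((T p : ℤ) : R) = 1 := by
    apply hinj
    rw [map_intCast, map_one, hTS]
  have hmod := (ZMod.intCast_eq_intCast_iff (T p) 1 (p ^ 2)).mp (by rw [hfin]; norm_num)
  have hcast : ((p ^ 2 : ℕ) : ℤ) = (p : ℤ) ^ 2 := by push_cast; ring
  rw [← hcast]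
  exact hmod
end

section
/- For every prime p > 3, T_{p-1} ≡ 3^{p-1}·(p|3) (mod p²), where (p|3) denotes the Legendre symbol. -/
open Finset

open Polynomial

section Aux

def eps (n : ℕ) : ℤ := if n % 3 = 0 then 1 else if n % 3 = 1 then -1 else 0
def cc (p j : ℕ) : ℤ := (-1)^(j-1) * (p.choose j / p : ℕ)
noncomputable def MM (p : ℕ) : Polynomial ℤ := ∑ j ∈ Ico 1 p, Polynomial.C (cc p j) * X^j
noncomputable def M3 (p : ℕ) : Polynomial ℤ := ∑ j ∈ Ico 1 p, Polynomial.C (cc p j) * X^(3*j)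
noncomputable def GG (p : ℕ) : Polynomial ℤ := (1 - X) * ∑ t ∈ range (p+1), X^(3*t)
noncomputable def qq : Polynomial ℤ := 1 + X + X^2

variable {p : ℕ}


lemma prod_add_eps {α : Type*} [DecidableEq α] {R : Type*} [CommRing R] (π : R) (hπ : π * π = 0)
    (s : Finset α) (a b : α → R) :
    ∏ j ∈ s, (a j + π * b j) = ∏ j ∈ s, a j + π * ∑ j ∈ s, b j * ∏ i ∈ s.erase j, a i := by
  induction s using Finset.induction_on with
  | empty => simp
  | @insert x s hx ih =>
    rw [Finset.prod_insert hx, Finset.prod_insert hx, Finset.sum_insert hx, ih,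
      Finset.erase_insert hx]
    have h1 : ∀ j ∈ s, b j * ∏ i ∈ (insert x s).erase j, a i
        = a x * (b j * ∏ i ∈ s.erase j, a i) := by
      intro j hj
      have hjx : x ≠ j := by rintro rfl; exact hx hj
      rw [Finset.erase_insert_of_ne hjx, Finset.prod_insert (fun h => hx (Finset.mem_of_mem_erase h))]
      ring
    rw [Finset.sum_congr rfl h1, ← Finset.mul_sum]
    linear_combination (b x * ∑ j ∈ s, b j * ∏ i ∈ s.erase j, a i) * hπ

lemma coeff_one_sub_X_pow (n k : ℕ) :
    ((1 - X : Polynomial ℤ)^n).coeff k = (-1:ℤ)^k * (n.choose k : ℤ) := by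
  have h : (1 - X : Polynomial ℤ)^n
      = ∑ j ∈ range (n+1), Polynomial.C ((-1:ℤ)^j * (n.choose j : ℤ)) * X^j := by
    rw [show (1 - X : Polynomial ℤ) = -X + 1 by ring, add_pow]
    refine Finset.sum_congr rfl fun j hj => ?_
    rw [neg_pow]
    simp only [one_pow, mul_one, map_mul, map_pow, map_neg, Polynomial.C_1, map_natCast]
    ring
  rw [h, Polynomial.finset_sum_coeff]
  simp only [Polynomial.coeff_C_mul, Polynomial.coeff_X_pow, mul_ite, mul_one, mul_zero]
  by_cases hk : k ≤ n
  · rw [Finset.sum_eq_single k (fun j _ hj => by rw [if_neg (Ne.symm hj)])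
      (fun h => absurd (Finset.mem_range.mpr (Nat.lt_succ_of_le hk)) h)]
    simp
  · rw [Finset.sum_eq_zero, Nat.choose_eq_zero_of_lt (by omega)]
    · simp
    · intro j hj
      rw [if_neg]
      intro h; subst h; exact hk (by simpa using Nat.lt_succ_iff.mp (Finset.mem_range.mp hj))

lemma A2 {p : ℕ} (hp : p.Prime) (x y : ℤ) (h : ((x : ZMod p) = (y : ZMod p))) :
    ((p * x : ℤ) : ZMod (p^2)) = ((p * y : ℤ) : ZMod (p^2)) := by
  have h1 : (p:ℤ) ∣ x - y := by
    have := (ZMod.intCast_zmod_eq_zero_iff_dvd (x - y) p).mp (by push_cast; rw [h]; ring)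
    exact_mod_cast this
  have h2 : ((p^2 : ℕ) : ℤ) ∣ p * x - p * y := by
    push_cast
    rw [show (p:ℤ) * x - p * y = p * (x - y) by ring, pow_two]
    exact mul_dvd_mul_left _ h1
  have := (ZMod.intCast_zmod_eq_zero_iff_dvd (p*x - p*y) (p^2)).mpr h2
  push_cast at this ⊢
  exact sub_eq_zero.mp this





lemma MM_coeff (n : ℕ) : (MM p).coeff n = if n ∈ Ico 1 p then cc p n else 0 := by
  rw [MM, Polynomial.finset_sum_coeff]
  simp only [Polynomial.coeff_C_mul, Polynomial.coeff_X_pow, mul_ite, mul_one, mul_zero]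
  by_cases hn : n ∈ Ico 1 p
  · rw [Finset.sum_eq_single n (fun j _ hj => by rw [if_neg (Ne.symm hj)])
      (fun h => absurd hn h), if_pos rfl, if_pos hn]
  · rw [if_neg hn, Finset.sum_eq_zero]
    intro j hj
    rw [if_neg]
    rintro rfl; exact hn hj

lemma pMM (hp : p.Prime) (hp3 : 3 < p) : Polynomial.C (p:ℤ) * MM p = 1 - X^p - (1 - X)^p := by
  ext n
  rw [Polynomial.coeff_C_mul, MM_coeff]
  simp only [Polynomial.coeff_sub, Polynomial.coeff_one, Polynomial.coeff_X_pow,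
    coeff_one_sub_X_pow]
  by_cases hn : n ∈ Ico 1 p
  · simp only [Finset.mem_Ico] at hn
    rw [if_pos, if_neg (by omega), if_neg (by omega), cc]
    have hd : p ∣ p.choose n := hp.dvd_choose_self (by omega) (by omega)
    have : ((p.choose n / p : ℕ) : ℤ) * p = (p.choose n : ℤ) := by
      exact_mod_cast congrArg (Nat.cast : ℕ → ℤ) (Nat.div_mul_cancel hd)
    have hsgn : (-1:ℤ)^(n-1) = -(-1:ℤ)^n := by
      conv_rhs => rw [show n = (n-1)+1 by omega]
      rw [pow_succ]; ring
    rw [hsgn]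
    linear_combination (-(-1:ℤ)^n) * this
    · simp [Finset.mem_Ico]; omega
  · simp only [Finset.mem_Ico] at hn
    rw [if_neg (by simp [Finset.mem_Ico]; omega)]
    rcases Nat.lt_or_ge n 1 with h1 | h1
    · interval_cases n
      simp
      omega
    · -- n ≥ p
      have hnp : p ≤ n := by omega
      rcases eq_or_lt_of_le hnp with rfl | hlt
      · rw [if_neg (by omega), if_pos rfl, Nat.choose_self]
        have : Odd p := hp.odd_of_ne_two (by omega)
        rw [Odd.neg_one_pow this]
        ring
      · rw [if_neg (by omega), if_neg (by omega), Nat.choose_eq_zero_of_lt hlt]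
        ring

lemma M3_comp : M3 p = (MM p).comp (X^3) := by
  rw [MM, M3]
  symm
  rw [Polynomial.comp, Polynomial.eval₂_finset_sum]
  refine Finset.sum_congr rfl fun j hj => ?_
  rw [Polynomial.eval₂_mul, Polynomial.eval₂_C, Polynomial.eval₂_X_pow, ← pow_mul]

lemma pM3 (hp : p.Prime) (hp3 : 3 < p) :
    Polynomial.C (p:ℤ) * M3 p = 1 - X^(3*p) - (1 - X^3)^p := by
  have := congrArg (fun f => Polynomial.comp f (X^3)) (pMM hp hp3)
  simp only [Polynomial.mul_comp, Polynomial.C_comp, Polynomial.sub_comp, Polynomial.one_comp,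
    Polynomial.pow_comp, Polynomial.X_comp] at this
  rw [M3_comp]
  rw [this, ← pow_mul]

lemma qGG : qq * GG p = 1 - X^(3*p+3) := by
  have hg := geom_sum_mul (X^3 : Polynomial ℤ) (p+1)
  have h1 : ∑ i ∈ range (p+1), ((X:Polynomial ℤ)^3)^i = ∑ t ∈ range (p+1), (X:Polynomial ℤ)^(3*t) := by
    refine Finset.sum_congr rfl fun t _ => by rw [← pow_mul]
  rw [h1] at hg
  rw [GG, qq]
  have h2 : ((X:Polynomial ℤ)^3)^(p+1) = X^(3*p+3) := by
    rw [← pow_mul, show 3*(p+1) = 3*p+3 by ring]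
  rw [h2] at hg
  linear_combination (-1 : Polynomial ℤ) * hg



lemma cast_psub (hp1 : 1 ≤ p) (j : ℕ) (hj : j ≤ p) : (((p - j : ℕ)) : ZMod p) = -(j : ZMod p) := by
  have h := congrArg (fun m : ℕ => (m : ZMod p)) (Nat.sub_add_cancel hj)
  push_cast at h
  rw [ZMod.natCast_self] at h
  linear_combination h

lemma refl_sum [hp : Fact p.Prime] (a b : ℕ) (ha : 1 ≤ a) (hb : b ≤ p) :
    ∑ j ∈ Ico a b, ((j : ZMod p))⁻¹ = -∑ j ∈ Ico (p+1-b) (p+1-a), ((j : ZMod p))⁻¹ := by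
  rw [← Finset.sum_neg_distrib]
  refine Finset.sum_nbij' (fun j => p - j) (fun j => p - j) ?_ ?_ ?_ ?_ ?_
  · intro j hj; simp only [Finset.mem_Ico] at hj ⊢; omega
  · intro j hj; simp only [Finset.mem_Ico] at hj ⊢; omega
  · intro j hj; simp only [Finset.mem_Ico] at hj; show p - (p - j) = j; omega
  · intro j hj; simp only [Finset.mem_Ico] at hj; show p - (p - j) = j; omega
  · intro j hj
    simp only [Finset.mem_Ico] at hj
    show ((j:ZMod p))⁻¹ = -(((p - j : ℕ) : ZMod p))⁻¹
    rw [cast_psub (by omega) j (by omega), inv_neg, neg_neg]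

lemma class_refl_zero [hp : Fact p.Prime] (hp3 : 3 < p) (c : ℕ)
    (hc : ∀ j, 1 ≤ j → j < p → (j % 3 = c ↔ (p - j) % 3 = c)) :
    ∑ j ∈ (Ico 1 p).filter (fun j => j % 3 = c), ((j : ZMod p))⁻¹ = 0 := by
  have key : ∑ j ∈ (Ico 1 p).filter (fun j => j % 3 = c), ((j : ZMod p))⁻¹
      = -∑ j ∈ (Ico 1 p).filter (fun j => j % 3 = c), ((j : ZMod p))⁻¹ := by
    rw [← Finset.sum_neg_distrib]
    refine Finset.sum_nbij' (fun j => p - j) (fun j => p - j) ?_ ?_ ?_ ?_ ?_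
    · intro j hj; simp only [Finset.mem_filter, Finset.mem_Ico] at hj ⊢
      refine ⟨by omega, ?_⟩
      exact (hc j (by omega) (by omega)).mp hj.2
    · intro j hj; simp only [Finset.mem_filter, Finset.mem_Ico] at hj ⊢
      exact ⟨by omega, (hc j (by omega) (by omega)).mp hj.2⟩
    · intro j hj; simp only [Finset.mem_filter, Finset.mem_Ico] at hj; show p - (p - j) = j; omega
    · intro j hj; simp only [Finset.mem_filter, Finset.mem_Ico] at hj; show p - (p - j) = j; omega
    · intro j hj
      simp only [Finset.mem_filter, Finset.mem_Ico] at hj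
      show ((j:ZMod p))⁻¹ = -(((p - j : ℕ) : ZMod p))⁻¹
      rw [cast_psub (by omega) j (by omega), inv_neg, neg_neg]
  have h2 : (2 : ZMod p) ≠ 0 := by
    have : ((2:ℕ) : ZMod p) ≠ 0 := by
      rw [Ne, ZMod.natCast_eq_zero_iff]
      intro hdvd
      have := Nat.le_of_dvd (by omega) hdvd
      omega
    push_cast at this
    exact this
  have := add_eq_zero_iff_eq_neg.mpr key
  rw [← two_mul] at this
  rcases mul_eq_zero.mp this with h | h
  · exact absurd h h2
  · exact h

lemma class0_eq [hp : Fact p.Prime] (hp3 : 3 < p) :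
    ∑ j ∈ (Ico 1 p).filter (fun j => j % 3 = 0), ((j : ZMod p))⁻¹
      = (3 : ZMod p)⁻¹ * ∑ j ∈ Ico 1 ((p-1)/3 + 1), ((j : ZMod p))⁻¹ := by
  rw [Finset.mul_sum]
  refine Finset.sum_nbij' (fun j => j / 3) (fun j => 3 * j) ?_ ?_ ?_ ?_ ?_
  · intro j hj; simp only [Finset.mem_filter, Finset.mem_Ico] at hj ⊢; omega
  · intro j hj; simp only [Finset.mem_filter, Finset.mem_Ico] at hj ⊢; omega
  · intro j hj; simp only [Finset.mem_filter, Finset.mem_Ico] at hj; show 3 * (j / 3) = j; omega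
  · intro j hj; simp only [Finset.mem_Ico] at hj; show (3 * j) / 3 = j; omega
  · intro j hj
    simp only [Finset.mem_filter, Finset.mem_Ico] at hj
    show ((j:ZMod p))⁻¹ = (3:ZMod p)⁻¹ * (((j/3 : ℕ)):ZMod p)⁻¹
    rw [← mul_inv]
    congr 1
    have : (3 * (j / 3) : ℕ) = j := by omega
    calc ((j : ℕ) : ZMod p) = ((3 * (j/3) : ℕ) : ZMod p) := by rw [this]
      _ = 3 * ((j/3 : ℕ) : ZMod p) := by push_cast; ring





lemma A2' (hp : p.Prime) (x y : ℤ) (h : ((p * x : ℤ) : ZMod (p^2)) = ((p * y : ℤ) : ZMod (p^2))) :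
    (x : ZMod p) = (y : ZMod p) := by
  have hp0 : (p:ℤ) ≠ 0 := by exact_mod_cast hp.pos.ne'
  have h1 : (p:ℤ) * p ∣ p * (x - y) := by
    have := (ZMod.intCast_zmod_eq_zero_iff_dvd (p*x - p*y) (p^2)).mp
      (by push_cast at h ⊢; rw [sub_eq_zero]; exact h)
    push_cast at this
    rw [show (p:ℤ) * x - p * y = p * (x - y) by ring, pow_two] at this
    exact this
  have h2 : (p:ℤ) ∣ x - y := (mul_dvd_mul_iff_left hp0).mp h1
  have := (ZMod.intCast_zmod_eq_zero_iff_dvd (x - y) p).mpr h2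
  push_cast at this
  rw [sub_eq_zero] at this
  exact this

lemma natcast_nonzero [hp : Fact p.Prime] (j : ℕ) (h1 : 1 ≤ j) (h2 : ¬ p ∣ j) :
    ((j:ℕ) : ZMod p) ≠ 0 := by
  rw [Ne, ZMod.natCast_eq_zero_iff]
  exact h2

lemma glaisher [hp : Fact p.Prime] (hp3 : 3 < p) (Q : ℤ) (hQ : (3:ℤ)^(p-1) = 1 + p * Q) :
    (3 : ZMod p) * (Q : ZMod p) = -2 * ∑ j ∈ Ico 1 ((p-1)/3 + 1), ((j : ZMod p))⁻¹ := by
  have hpp : 0 < p := by omega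
  have hmod3 : p % 3 = 1 ∨ p % 3 = 2 := by
    have : ¬ (3 ∣ p) := by
      intro h
      have := (Nat.prime_dvd_prime_iff_eq (by norm_num) hp.out).mp h
      omega
    omega
  have hmod2 : p % 2 = 1 := by
    have : ¬ (2 ∣ p) := by
      intro h
      have := (Nat.prime_dvd_prime_iff_eq (by norm_num) hp.out).mp h
      omega
    omega
  have h3K : ((3:ℕ) : ZMod p) ≠ 0 := natcast_nonzero 3 (by omega) (by
    intro h; have := Nat.le_of_dvd (by omega) h; omega)
  have hjK : ∀ j, 1 ≤ j → j < p → ((j:ℕ) : ZMod p) ≠ 0 := fun j hj1 hj2 =>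
    natcast_nonzero j hj1 (fun h => by have := Nat.le_of_dvd (by omega) h; omega)
  have h3jne : ∀ j ∈ Ico 1 p, ¬ p ∣ 3*j := by
    intro j hj hdvd
    simp only [Finset.mem_Ico] at hj
    rcases (Nat.Prime.dvd_mul hp.out).mp hdvd with h | h
    · have := Nat.le_of_dvd (by omega) h; omega
    · have := Nat.le_of_dvd (by omega) h; omega
  -- the factorial as product
  have hfacN : (∏ x ∈ Ico 1 p, x) = (p-1).factorial := by
    conv_lhs => rw [show p = p-1+1 by omega]
    exact Finset.prod_Ico_id_eq_factorial (p-1)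
  ---- Step A : in ZMod (p^2)
  set R' := ZMod (p^2)
  have hπ : ((p:R')) * ((p:R')) = 0 := by
    have : (((p*p:ℕ)):R') = 0 := by rw [show p*p = p^2 by ring]; exact ZMod.natCast_self (p^2)
    push_cast [R'] at this
    exact this
  have hsplit : ∀ j ∈ Ico 1 p, (((3*j:ℕ)):R')
      = ((3*j % p : ℕ) : R') + (p:R') * ((3*j / p : ℕ) : R') := by
    intro j _
    have h := Nat.div_add_mod (3*j) p
    calc (((3*j:ℕ)):R') = ((p * (3*j/p) + 3*j % p : ℕ) : R') := by rw [h]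
      _ = _ := by push_cast [R']; ring
  have hA := prod_add_eps ((p:R')) hπ (Ico 1 p)
    (fun j => ((3*j % p : ℕ) : R')) (fun j => ((3*j / p : ℕ) : R'))
  rw [← Finset.prod_congr rfl hsplit] at hA
  -- LHS of hA is 3^(p-1) (p-1).factorial
  have hL : ∏ j ∈ Ico 1 p, (((3*j:ℕ)):R') = (3:R')^(p-1) * (((p-1).factorial : ℕ) : R') := by
    have h1 : ∀ j ∈ Ico 1 p, (((3*j:ℕ)):R') = (3:R') * ((j:ℕ):R') := by
      intro j _; push_cast [R']; ring
    rw [Finset.prod_congr rfl h1, Finset.prod_mul_distrib, Finset.prod_const, Nat.card_Ico,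
      ← Nat.cast_prod, hfacN]
  -- the mod-p product is (p-1).factorial
  set i3 : ℕ := ((3:ZMod p)⁻¹).val with hi3def
  have h3Kinv : ((i3:ℕ) : ZMod p) = ((3:ZMod p))⁻¹ := by
    rw [hi3def, ZMod.natCast_val, ZMod.cast_id]
  have hmod31 : (i3 * 3) % p = 1 % p := by
    apply (ZMod.natCast_eq_natCast_iff _ _ _).mp
    push_cast
    rw [h3Kinv]
    rw [inv_mul_cancel₀ (by exact_mod_cast h3K)]
  have hBij : ∏ j ∈ Ico 1 p, ((3*j % p : ℕ) : R') = ∏ j ∈ Ico 1 p, ((j:ℕ) : R') := by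
    refine Finset.prod_nbij' (fun j => 3*j % p) (fun j => (i3*j) % p) ?_ ?_ ?_ ?_ ?_
    · intro j hj
      simp only [Finset.mem_Ico] at hj ⊢
      have hne : 3*j % p ≠ 0 := fun h => h3jne j (by simp [Finset.mem_Ico]; omega)
        (Nat.dvd_of_mod_eq_zero h)
      exact ⟨by omega, Nat.mod_lt _ hpp⟩
    · intro j hj
      simp only [Finset.mem_Ico] at hj ⊢
      have hne : (i3*j) % p ≠ 0 := by
        intro h
        have hdvd := Nat.dvd_of_mod_eq_zero h
        rcases (Nat.Prime.dvd_mul hp.out).mp hdvd with h' | h'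
        · -- p ∣ i3 : contradiction with i3*3 ≡ 1
          obtain ⟨t, ht⟩ := h'
          have hm := hmod31
          rw [ht, show p * t * 3 = p * (t*3) by ring, Nat.mul_mod_right,
            Nat.mod_eq_of_lt (by omega)] at hm
          omega
        · have := Nat.le_of_dvd (by omega) h'; omega
      exact ⟨by omega, Nat.mod_lt _ hpp⟩
    · intro j hj
      simp only [Finset.mem_Ico] at hj
      show (i3 * (3*j % p)) % p = j
      have e1 : (i3 * (3*j % p)) % p = (i3 * (3*j)) % p := by
        exact Nat.ModEq.mul_left i3 (Nat.mod_modEq (3*j) p)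
      have e2 : (i3 * (3*j)) % p = ((i3*3)*j) % p := by rw [show i3*(3*j) = (i3*3)*j by ring]
      have e3 : ((i3*3)*j) % p = (1*j) % p := Nat.ModEq.mul_right j hmod31
      rw [e1, e2, e3, one_mul, Nat.mod_eq_of_lt (by omega)]
    · intro j hj
      simp only [Finset.mem_Ico] at hj
      show (3 * ((i3*j) % p)) % p = j
      have e1 : (3 * ((i3*j) % p)) % p = (3 * (i3*j)) % p :=
        Nat.ModEq.mul_left 3 (Nat.mod_modEq (i3*j) p)
      have e2 : (3 * (i3*j)) % p = ((i3*3)*j) % p := by rw [show 3*(i3*j) = (i3*3)*j by ring]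
      have e3 : ((i3*3)*j) % p = (1*j) % p := Nat.ModEq.mul_right j hmod31
      rw [e1, e2, e3, one_mul, Nat.mod_eq_of_lt (by omega)]
    · intro j hj
      rfl
  have hBfac : ∏ j ∈ Ico 1 p, ((j:ℕ) : R') = (((p-1).factorial : ℕ) : R') := by
    rw [← Nat.cast_prod, hfacN]
  -- put together in R'
  set Unat : ℕ := ∑ j ∈ Ico 1 p, (3*j/p) * ∏ i ∈ (Ico 1 p).erase j, (3*i % p) with hUdef
  have hUcast : ((Unat : ℕ) : R') = ∑ j ∈ Ico 1 p, ((3*j / p : ℕ) : R')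
      * ∏ i ∈ (Ico 1 p).erase j, ((3*i % p : ℕ) : R') := by
    rw [hUdef]
    push_cast [R']
    rfl
  rw [hL, hBij, hBfac, ← hUcast] at hA
  -- cast hQ into R'
  have hQR : ((3:R'))^(p-1) = 1 + (p:R') * ((Q:ℤ) : R') := by
    have := congrArg (fun z : ℤ => ((z : ℤ) : R')) hQ
    push_cast [R'] at this ⊢
    exact this
  have hkey : ((p * (Q * ((p-1).factorial : ℕ)) : ℤ) : R') = ((p * (Unat : ℕ) : ℤ) : R') := by
    push_cast [R']
    have : (1 + (p:R') * ((Q:ℤ) : R')) * (((p-1).factorial : ℕ) : R')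
        = (((p-1).factorial : ℕ) : R') + (p:R') * ((Unat:ℕ) : R') := by rw [← hQR]; exact hA
    linear_combination this
  have hK := A2' hp.out _ _ hkey
  ---- Step B : in ZMod p
  push_cast at hK
  -- hK : (Q : ZMod p) * (p-1).factorial = Unat
  have hfullK : ∏ i ∈ Ico 1 p, ((3*i:ℕ) : ZMod p) = (((p-1).factorial : ℕ) : ZMod p) := by
    have h1 : ∀ j ∈ Ico 1 p, (((3*j:ℕ)):ZMod p) = (3:ZMod p) * ((j:ℕ):ZMod p) := by
      intro j _; push_cast; ring
    rw [Finset.prod_congr rfl h1, Finset.prod_mul_distrib, Finset.prod_const, Nat.card_Ico,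
      ← Nat.cast_prod, hfacN]
    have hferm : (3:ZMod p)^(p-1) = 1 := ZMod.pow_card_sub_one_eq_one (by exact_mod_cast h3K)
    rw [hferm, one_mul]
  have hUK : ((Unat : ℕ) : ZMod p)
      = ∑ j ∈ Ico 1 p, ((3*j/p : ℕ) : ZMod p) * ((((p-1).factorial : ℕ)) : ZMod p) * (((3*j:ℕ) : ZMod p))⁻¹ := by
    rw [hUdef]
    push_cast
    refine Finset.sum_congr rfl fun j hj => ?_
    have herase : ∏ i ∈ (Ico 1 p).erase j, ((3*i % p : ℕ) : ZMod p)
        = (((p-1).factorial : ℕ) : ZMod p) * (((3*j:ℕ) : ZMod p))⁻¹ := by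
      have hstep : ∀ i ∈ (Ico 1 p).erase j, ((3*i % p : ℕ) : ZMod p) = ((3*i : ℕ) : ZMod p) := by
        intro i _
        rw [ZMod.natCast_mod]
      rw [Finset.prod_congr rfl hstep]
      have hpe := Finset.prod_erase_mul (Ico 1 p) (fun i => ((3*i:ℕ) : ZMod p)) hj
      rw [hfullK] at hpe
      have h3j0 : ((3*j:ℕ) : ZMod p) ≠ 0 := natcast_nonzero _ (by
        simp only [Finset.mem_Ico] at hj; omega) (h3jne j hj)
      have h2 : (∏ i ∈ (Ico 1 p).erase j, ((3*i:ℕ) : ZMod p)) * ((3*j:ℕ) : ZMod p)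
          * (((3*j:ℕ) : ZMod p))⁻¹ = (((p-1).factorial : ℕ) : ZMod p) * (((3*j:ℕ):ZMod p))⁻¹ := by
        rw [hpe]
      rwa [mul_assoc, mul_inv_cancel₀ h3j0, mul_one] at h2
    rw [herase]
    push_cast
    ring
  rw [hUK] at hK
  -- cancel (p-1).factorial
  have hfacne : (((p-1).factorial : ℕ) : ZMod p) ≠ 0 := by
    rw [Ne, ZMod.natCast_eq_zero_iff]
    intro h
    have := (Nat.Prime.dvd_factorial hp.out).mp h
    omega
  have hsum : (Q : ZMod p) = ∑ j ∈ Ico 1 p, ((3*j/p : ℕ) : ZMod p) * (((3*j:ℕ) : ZMod p))⁻¹ := by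
    refine mul_right_cancel₀ hfacne ?_
    rw [hK, Finset.sum_mul]
    refine Finset.sum_congr rfl fun j hj => ?_
    ring
  set m3 := (p-1)/3 with hm3
  set m6 := (2*p-1)/3 with hm6
  rw [← Finset.sum_Ico_consecutive _ (by omega : 1 ≤ m3+1) (by omega : m3+1 ≤ p)] at hsum
  rw [← Finset.sum_Ico_consecutive _ (by omega : m3+1 ≤ m6+1) (by omega : m6+1 ≤ p)] at hsum
  have hz1 : ∑ j ∈ Ico 1 (m3+1), ((3*j/p : ℕ) : ZMod p) * (((3*j:ℕ) : ZMod p))⁻¹ = 0 := by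
    apply Finset.sum_eq_zero
    intro j hj
    simp only [Finset.mem_Ico] at hj
    rw [Nat.div_eq_of_lt (by omega)]
    simp
  have hmid : ∑ j ∈ Ico (m3+1) (m6+1), ((3*j/p : ℕ) : ZMod p) * (((3*j:ℕ) : ZMod p))⁻¹
      = (3:ZMod p)⁻¹ * ∑ j ∈ Ico (m3+1) (m6+1), ((j : ZMod p))⁻¹ := by
    have h1 : ∀ j ∈ Ico (m3+1) (m6+1), ((3*j/p : ℕ) : ZMod p) * (((3*j:ℕ) : ZMod p))⁻¹
        = (3:ZMod p)⁻¹ * ((j:ZMod p))⁻¹ := by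
      intro j hj
      simp only [Finset.mem_Ico] at hj
      rw [show (3*j/p) = 1 from Nat.div_eq_of_lt_le (by omega) (by omega),
        show ((3*j : ℕ) : ZMod p) = (3:ZMod p) * ((j:ℕ):ZMod p) by push_cast; ring, mul_inv]
      push_cast
      ring
    rw [Finset.sum_congr rfl h1, ← Finset.mul_sum]
  have htop : ∑ j ∈ Ico (m6+1) p, ((3*j/p : ℕ) : ZMod p) * (((3*j:ℕ) : ZMod p))⁻¹
      = (3:ZMod p)⁻¹ * (2 * ∑ j ∈ Ico (m6+1) p, ((j : ZMod p))⁻¹) := by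
    have h1 : ∀ j ∈ Ico (m6+1) p, ((3*j/p : ℕ) : ZMod p) * (((3*j:ℕ) : ZMod p))⁻¹
        = (3:ZMod p)⁻¹ * (2 * ((j:ZMod p))⁻¹) := by
      intro j hj
      simp only [Finset.mem_Ico] at hj
      rw [show (3*j/p) = 2 from Nat.div_eq_of_lt_le (by omega) (by omega),
        show ((3*j : ℕ) : ZMod p) = (3:ZMod p) * ((j:ℕ):ZMod p) by push_cast; ring, mul_inv]
      push_cast
      ring
    rw [Finset.sum_congr rfl h1, ← Finset.mul_sum, ← Finset.mul_sum]
  have h2ne : (2 : ZMod p) ≠ 0 := by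
    have := natcast_nonzero (p := p) 2 (by omega) (by
      intro h; have := Nat.le_of_dvd (by omega) h; omega)
    push_cast at this
    exact this
  have hy : ∑ j ∈ Ico (m3+1) (m6+1), ((j : ZMod p))⁻¹ = 0 := by
    have hr := refl_sum (p := p) (m3+1) (m6+1) (by omega) (by omega)
    rw [show p+1-(m6+1) = m3+1 by omega, show p+1-(m3+1) = m6+1 by omega] at hr
    have h3 := add_eq_zero_iff_eq_neg.mpr hr
    rw [← two_mul] at h3
    rcases mul_eq_zero.mp h3 with h | h
    · exact absurd h h2ne
    · exact h
  have hzz : ∑ j ∈ Ico (m6+1) p, ((j : ZMod p))⁻¹ = -∑ j ∈ Ico 1 (m3+1), ((j : ZMod p))⁻¹ := by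
    have hr := refl_sum (p := p) (m6+1) p (by omega) (by omega)
    rw [show p+1-p = 1 by omega, show p+1-(m6+1) = m3+1 by omega] at hr
    exact hr
  rw [hz1, hmid, htop, hy, hzz] at hsum
  rw [hsum]
  have h3inv : (3:ZMod p) * (3:ZMod p)⁻¹ = 1 := mul_inv_cancel₀ (by exact_mod_cast h3K)
  have hx := ∑ j ∈ Ico 1 (m3+1), ((j : ZMod p))⁻¹
  linear_combination (-2 * ∑ j ∈ Ico 1 (m3+1), ((j : ZMod p))⁻¹) * h3inv





lemma GG_expand : GG p = (∑ t ∈ range (p+1), (X:Polynomial ℤ)^(3*t))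
    - ∑ t ∈ range (p+1), (X:Polynomial ℤ)^(3*t+1) := by
  rw [GG, sub_mul, one_mul, Finset.mul_sum]
  congr 1
  refine Finset.sum_congr rfl fun t _ => ?_
  rw [← pow_succ']

lemma GG_coeff (hp3 : 3 < p) (n : ℕ) (hn : n ≤ 3*p) : (GG p).coeff n = eps n := by
  rw [GG_expand, Polynomial.coeff_sub, Polynomial.finset_sum_coeff,
    Polynomial.finset_sum_coeff]
  simp only [Polynomial.coeff_X_pow]
  have h0 : (∑ t ∈ range (p+1), if n = 3*t then (1:ℤ) else 0)
      = if n % 3 = 0 then 1 else 0 := by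
    split_ifs with h
    · rw [Finset.sum_eq_single_of_mem (n/3) (Finset.mem_range.mpr (by omega))
        (fun t _ ht => by rw [if_neg (by omega)])]
      rw [if_pos (by omega)]
    · exact Finset.sum_eq_zero fun t _ => by rw [if_neg (by omega)]
  have h1 : (∑ t ∈ range (p+1), if n = 3*t+1 then (1:ℤ) else 0)
      = if n % 3 = 1 then 1 else 0 := by
    split_ifs with h
    · rw [Finset.sum_eq_single_of_mem (n/3) (Finset.mem_range.mpr (by omega))
        (fun t _ ht => by rw [if_neg (by omega)])]
      rw [if_pos (by omega)]
    · exact Finset.sum_eq_zero fun t _ => by rw [if_neg (by omega)]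
  rw [h0, h1, eps]
  have := Nat.mod_lt n (show 0 < 3 by norm_num)
  interval_cases h : n % 3 <;> simp

lemma mainE (hp : p.Prime) (hp3 : 3 < p) :
    qq^(p-1) * (1 - X^(3*p+3)) * (1 - X^p) =
      GG p * (1 - X^(3*p)) - Polynomial.C (p:ℤ) * (GG p * M3 p)
        + Polynomial.C (p:ℤ) * (qq^(p-1) * qq * GG p * MM p) := by
  have hq : qq^(p-1) * qq = qq^p := by
    rw [← pow_succ, show p - 1 + 1 = p by omega]
  have h1 : qq^(p-1) * qq * (1 - X^p - Polynomial.C (p:ℤ) * MM p)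
      = 1 - X^(3*p) - Polynomial.C (p:ℤ) * M3 p := by
    rw [pMM hp hp3, pM3 hp hp3, hq]
    have : (1:Polynomial ℤ) - X^p - (1 - X^p - (1-X)^p) = (1-X)^p := by ring
    rw [this, ← mul_pow, show (qq * (1 - X) : Polynomial ℤ) = 1 - X^3 by rw [qq]; ring]
    ring
  calc qq^(p-1) * (1 - X^(3*p+3)) * (1 - X^p)
      = qq^(p-1) * (qq * GG p) * (1 - X^p) := by rw [qGG]
    _ = GG p * (qq^(p-1) * qq * (1 - X^p - Polynomial.C (p:ℤ) * MM p))
        + Polynomial.C (p:ℤ) * (qq^(p-1) * qq * GG p * MM p) := by ring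
    _ = _ := by rw [h1]; ring

lemma coeff_extract (hp : p.Prime) (hp3 : 3 < p) :
    (qq^(p-1)).coeff (p-1) = eps (p-1) - p * (GG p * M3 p).coeff (p-1)
      + p * (qq^(p-1) * qq * GG p * MM p).coeff (p-1) := by
  have hE := congrArg (fun f => Polynomial.coeff f (p-1)) (mainE hp hp3)
  have hL : (qq^(p-1) * (1 - X^(3*p+3)) * (1 - X^p)).coeff (p-1) = (qq^(p-1)).coeff (p-1) := by
    have : qq^(p-1) * (1 - X^(3*p+3)) * (1 - X^p)
        = qq^(p-1) - qq^(p-1) * X^p - qq^(p-1) * X^(3*p+3) + qq^(p-1) * X^(3*p+3) * X^p := by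
      ring
    rw [this]
    simp only [Polynomial.coeff_add, Polynomial.coeff_sub, mul_assoc, ← pow_add]
    rw [Polynomial.coeff_mul_X_pow', Polynomial.coeff_mul_X_pow', Polynomial.coeff_mul_X_pow']
    rw [if_neg (by omega), if_neg (by omega), if_neg (by omega)]
    ring
  have hR1 : (GG p * (1 - X^(3*p))).coeff (p-1) = eps (p-1) := by
    have : GG p * (1 - X^(3*p)) = GG p - GG p * X^(3*p) := by ring
    rw [this, Polynomial.coeff_sub, Polynomial.coeff_mul_X_pow', if_neg (by omega),
      GG_coeff hp3 (p-1) (by omega)]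
    ring
  rw [hL] at hE
  simp only [Polynomial.coeff_add, Polynomial.coeff_sub, Polynomial.coeff_C_mul] at hE
  rw [hR1] at hE
  rw [hE]

lemma Z1_eq (hp : p.Prime) (hp3 : 3 < p) :
    (GG p * MM p).coeff (p-1) = ∑ j ∈ Ico 1 p, cc p j * eps (p-1-j) := by
  conv_lhs => rw [MM, Finset.mul_sum]
  rw [Polynomial.finset_sum_coeff]
  refine Finset.sum_congr rfl fun j hj => ?_
  simp only [Finset.mem_Ico] at hj
  rw [show GG p * (Polynomial.C (cc p j) * X^j) = Polynomial.C (cc p j) * (GG p * X^j) by ring,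
    Polynomial.coeff_C_mul, Polynomial.coeff_mul_X_pow', if_pos (by omega),
    GG_coeff hp3 _ (by omega)]

lemma Z3_eq (hp : p.Prime) (hp3 : 3 < p) :
    (GG p * M3 p).coeff (p-1)
      = ∑ j ∈ Ico 1 p, cc p j * (if 3*j ≤ p-1 then eps (p-1-3*j) else 0) := by
  conv_lhs => rw [M3, Finset.mul_sum]
  rw [Polynomial.finset_sum_coeff]
  refine Finset.sum_congr rfl fun j hj => ?_
  simp only [Finset.mem_Ico] at hj
  rw [show GG p * (Polynomial.C (cc p j) * X^(3*j)) = Polynomial.C (cc p j) * (GG p * X^(3*j)) by ring,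
    Polynomial.coeff_C_mul, Polynomial.coeff_mul_X_pow']
  split_ifs with h
  · rw [GG_coeff hp3 _ (by omega)]
  · rfl




lemma Y_modp [hp : Fact p.Prime] (hp3 : 3 < p) :
    (((qq^(p-1) * qq * GG p * MM p).coeff (p-1) : ℤ) : ZMod p)
      = (((GG p * MM p).coeff (p-1) : ℤ) : ZMod p) := by
  set φ := Int.castRingHom (ZMod p) with hφ
  have hq : qq^(p-1) * qq = qq^p := by
    rw [← pow_succ, show p - 1 + 1 = p by omega]
  set D : Polynomial ℤ := qq^(p-1) * qq - (1 + X^p + X^(2*p)) with hD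
  have hDmap : D.map φ = 0 := by
    rw [hD, hq, qq]
    simp only [Polynomial.map_sub, Polynomial.map_add, Polynomial.map_pow,
      Polynomial.map_one, Polynomial.map_X]
    have h2 : ((1:Polynomial (ZMod p)) + X + X^2) = (1 + X) + X^2 := by ring
    rw [h2, add_pow_char, add_pow_char, one_pow, ← pow_mul]
    ring_nf
  have hdvd : (p:ℤ) ∣ (D * (GG p * MM p)).coeff (p-1) := by
    have h0 : (D * (GG p * MM p)).map φ = 0 := by
      rw [Polynomial.map_mul, hDmap, zero_mul]
    have hc := congrArg (fun f => Polynomial.coeff f (p-1)) h0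
    simp only [Polynomial.coeff_map, Polynomial.coeff_zero] at hc
    exact (ZMod.intCast_zmod_eq_zero_iff_dvd _ p).mp hc
  have hexp : (D * (GG p * MM p)).coeff (p-1)
      = (qq^(p-1) * qq * GG p * MM p).coeff (p-1) - (GG p * MM p).coeff (p-1) := by
    have hsplit : D * (GG p * MM p) = qq^(p-1) * qq * GG p * MM p - GG p * MM p
        - (GG p * MM p) * X^p - (GG p * MM p) * X^(2*p) := by
      rw [hD]; ring
    rw [hsplit]
    simp only [Polynomial.coeff_sub, Polynomial.coeff_mul_X_pow']
    rw [if_neg (by omega), if_neg (by omega)]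
    ring
  rw [hexp] at hdvd
  obtain ⟨k, hk⟩ := hdvd
  have : ((qq^(p-1) * qq * GG p * MM p).coeff (p-1) : ℤ)
      = (GG p * MM p).coeff (p-1) + p * k := by linarith [hk]
  rw [this]
  push_cast
  simp [ZMod.natCast_self]

lemma coeff_one_add_X_sq_pow (k : ℕ) :
    ((1 + X^2 : Polynomial ℤ)^k).coeff k
      = if k % 2 = 0 then ((k.choose (k/2) : ℤ)) else 0 := by
  have h : (1 + X^2 : Polynomial ℤ)^k = ∑ i ∈ range (k+1), X^(2*i) * (k.choose i : Polynomial ℤ) := by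
    rw [show (1 + X^2 : Polynomial ℤ) = X^2 + 1 by ring, add_pow]
    refine Finset.sum_congr rfl fun i _ => ?_
    rw [one_pow, ← pow_mul, mul_one]
  rw [h, Polynomial.finset_sum_coeff]
  have hterm : ∀ i, (X^(2*i) * (k.choose i : Polynomial ℤ)).coeff k
      = if k = 2*i then (k.choose i : ℤ) else 0 := by
    intro i
    rw [show ((k.choose i : Polynomial ℤ)) = Polynomial.C ((k.choose i : ℤ)) from (Polynomial.C_eq_natCast _).symm,
      mul_comm, Polynomial.coeff_C_mul, Polynomial.coeff_X_pow]
    split_ifs <;> simp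
  simp only [hterm]
  split_ifs with h2
  · rw [Finset.sum_eq_single_of_mem (k/2) (Finset.mem_range.mpr (by omega))
      (fun i _ hi => by rw [if_neg (by omega)])]
    rw [if_pos (by omega)]
  · exact Finset.sum_eq_zero fun i _ => by rw [if_neg (by omega)]

lemma T_eq_coeff (n : ℕ) : (qq^n).coeff n = T n := by
  have h : qq^n = ∑ k ∈ range (n+1), (1+X^2)^k * X^(n-k) * (n.choose k : Polynomial ℤ) := by
    rw [qq, show (1 + X + X^2 : Polynomial ℤ) = (1+X^2) + X by ring, add_pow]
  rw [h, Polynomial.finset_sum_coeff]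
  have hterm : ∀ k ∈ range (n+1), ((1+X^2:Polynomial ℤ)^k * X^(n-k) * (n.choose k : Polynomial ℤ)).coeff n
      = (n.choose k : ℤ) * (if k % 2 = 0 then ((k.choose (k/2) : ℤ)) else 0) := by
    intro k hk
    simp only [Finset.mem_range] at hk
    rw [show ((n.choose k : Polynomial ℤ)) = Polynomial.C ((n.choose k : ℤ)) from (Polynomial.C_eq_natCast _).symm,
      mul_comm, Polynomial.coeff_C_mul, Polynomial.coeff_mul_X_pow', if_pos (by omega),
      show n - (n - k) = k by omega, coeff_one_add_X_sq_pow]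
  rw [Finset.sum_congr rfl hterm]
  have hfil : ∑ k ∈ range (n+1), (n.choose k : ℤ) * (if k % 2 = 0 then ((k.choose (k/2):ℤ)) else 0)
      = ∑ k ∈ (range (n+1)).filter (fun k => k % 2 = 0), (n.choose k : ℤ) * (k.choose (k/2) : ℤ) := by
    rw [Finset.sum_filter]
    refine Finset.sum_congr rfl fun k _ => ?_
    split_ifs <;> simp
  rw [hfil, T]
  refine Finset.sum_nbij' (fun k => k/2) (fun l => 2*l) ?_ ?_ ?_ ?_ ?_
  · intro k hk
    simp only [Finset.mem_filter, Finset.mem_range] at hk ⊢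
    omega
  · intro l hl
    simp only [Finset.mem_filter, Finset.mem_range] at hl ⊢
    omega
  · intro k hk
    simp only [Finset.mem_filter, Finset.mem_range] at hk
    show 2*(k/2) = k
    omega
  · intro l hl
    show (2*l)/2 = l
    omega
  · intro k hk
    simp only [Finset.mem_filter, Finset.mem_range] at hk
    rw [show 2*(k/2) = k by omega]




lemma choose_p1 [hp : Fact p.Prime] (k : ℕ) (hk : k ≤ p - 1) :
    (((p-1).choose k : ℕ) : ZMod p) = (-1)^k := by
  induction k with
  | zero => simp
  | succ k ih =>
    have hk' : k ≤ p - 1 := by omega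
    have hp1 : 1 < p := hp.out.one_lt
    have hid : ((p-1).choose (k+1)) * (k+1) = (p-1).choose k * (p - 1 - k) :=
      Nat.choose_succ_right_eq (p-1) k
    have hcast := congrArg (fun m : ℕ => (m : ZMod p)) hid
    push_cast at hcast
    have hsub : ((p - 1 - k : ℕ) : ZMod p) = -((k:ZMod p)+1) := by
      have h1 : (p - 1 - k) + (k + 1) = p := by omega
      have h2 := congrArg (fun m : ℕ => (m : ZMod p)) h1
      push_cast at h2
      rw [ZMod.natCast_self] at h2
      linear_combination h2
    rw [hsub, ih hk'] at hcast
    have hne : ((k:ZMod p) + 1) ≠ 0 := by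
      have : (((k+1:ℕ)) : ZMod p) ≠ 0 := by
        rw [Ne, ZMod.natCast_eq_zero_iff]
        intro hdvd
        have := Nat.le_of_dvd (by omega) hdvd
        omega
      push_cast at this
      exact this
    refine mul_right_cancel₀ hne ?_
    rw [hcast]
    ring

lemma cc_K [hp : Fact p.Prime] (hp3 : 3 < p) (j : ℕ) (hj : j ∈ Ico 1 p) :
    ((cc p j : ℤ) : ZMod p) = ((j : ZMod p))⁻¹ := by
  simp only [Finset.mem_Ico] at hj
  have hd : p ∣ p.choose j := hp.out.dvd_choose_self (by omega) (by omega)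
  obtain ⟨d, hdd⟩ := hd
  have hsucc : p * (p-1).choose (j-1) = p.choose j * j := by
    have := Nat.add_one_mul_choose_eq (p-1) (j-1)
    rw [show p-1+1 = p by omega, show j-1+1 = j by omega] at this
    exact this
  have hdj : d * j = (p-1).choose (j-1) := by
    rw [hdd] at hsucc
    have : p * ((p-1).choose (j-1)) = p * (d * j) := by rw [hsucc]; ring
    exact (Nat.eq_of_mul_eq_mul_left (by omega) this).symm
  have hdval : p.choose j / p = d := by rw [hdd]; exact Nat.mul_div_cancel_left d (by omega)
  have hj0 : ((j:ZMod p)) ≠ 0 := by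
    rw [Ne, ZMod.natCast_eq_zero_iff]
    intro hdvd
    have := Nat.le_of_dvd (by omega) hdvd
    omega
  have h1 : ((d:ZMod p)) * j = (-1)^(j-1) := by
    have h2 := congrArg (fun m : ℕ => (m : ZMod p)) hdj
    push_cast at h2
    rw [h2, choose_p1 (j-1) (by omega)]
  have key : ((cc p j : ℤ) : ZMod p) * (j : ZMod p) = 1 := by
    rw [cc, hdval]
    push_cast
    calc (-1:ZMod p)^(j-1) * d * j = (-1)^(j-1) * ((d:ZMod p) * j) := by ring
      _ = (-1)^(j-1) * (-1)^(j-1) := by rw [h1]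
      _ = 1 := by rw [← pow_add, ← two_mul, pow_mul]; simp
  have := eq_inv_of_mul_eq_one_left key
  rw [← this]

lemma legendre_eq [hp : Fact p.Prime] (hp3 : 3 < p) :
    (legendreSym 3 (p : ℤ) : ℤ) = eps (p-1) := by
  unfold eps
  have h3 : ¬ (3 ∣ p) := by
    intro h
    have := (Nat.prime_dvd_prime_iff_eq (by norm_num) hp.out).mp h
    omega
  have hmod : (p : ℤ) % ((3:ℕ):ℤ) = ((p % 3 : ℕ) : ℤ) := by push_cast; omega
  rw [legendreSym.mod, hmod]
  have hp3' : p % 3 = 1 ∨ p % 3 = 2 := by omega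
  rcases hp3' with h | h
  · rw [h, if_pos (by omega)]
    norm_num
  · rw [h, if_neg (by omega), if_pos (by omega)]
    norm_num





lemma sum_classes [hp : Fact p.Prime] (e0 e1 e2 : ZMod p) :
    ∑ j ∈ Ico 1 p, (if j % 3 = 0 then e0 else if j % 3 = 1 then e1 else e2) * ((j:ZMod p))⁻¹
    = e0 * ∑ j ∈ (Ico 1 p).filter (fun j => j % 3 = 0), ((j:ZMod p))⁻¹
    + e1 * ∑ j ∈ (Ico 1 p).filter (fun j => j % 3 = 1), ((j:ZMod p))⁻¹
    + e2 * ∑ j ∈ (Ico 1 p).filter (fun j => j % 3 = 2), ((j:ZMod p))⁻¹ := by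
  rw [← Finset.sum_filter_add_sum_filter_not (Ico 1 p) (fun j => j % 3 = 0)]
  rw [← Finset.sum_filter_add_sum_filter_not ((Ico 1 p).filter (fun j => ¬ j % 3 = 0))
    (fun j => j % 3 = 1)]
  rw [Finset.filter_filter, Finset.filter_filter]
  have hs1 : (Ico 1 p).filter (fun j => ¬ j % 3 = 0 ∧ j % 3 = 1)
      = (Ico 1 p).filter (fun j => j % 3 = 1) := by
    apply Finset.filter_congr; intro j _; constructor
    · intro h; omega
    · intro h; omega
  have hs2 : (Ico 1 p).filter (fun j => ¬ j % 3 = 0 ∧ ¬ j % 3 = 1)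
      = (Ico 1 p).filter (fun j => j % 3 = 2) := by
    apply Finset.filter_congr; intro j _; constructor
    · intro h; omega
    · intro h; omega
  rw [hs1, hs2]
  have c0 : ∀ j ∈ (Ico 1 p).filter (fun j => j % 3 = 0),
      (if j % 3 = 0 then e0 else if j % 3 = 1 then e1 else e2) * ((j:ZMod p))⁻¹
        = e0 * ((j:ZMod p))⁻¹ := by
    intro j hj; simp only [Finset.mem_filter] at hj; rw [if_pos hj.2]
  have c1 : ∀ j ∈ (Ico 1 p).filter (fun j => j % 3 = 1),
      (if j % 3 = 0 then e0 else if j % 3 = 1 then e1 else e2) * ((j:ZMod p))⁻¹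
        = e1 * ((j:ZMod p))⁻¹ := by
    intro j hj; simp only [Finset.mem_filter] at hj
    rw [if_neg (by omega), if_pos hj.2]
  have c2 : ∀ j ∈ (Ico 1 p).filter (fun j => j % 3 = 2),
      (if j % 3 = 0 then e0 else if j % 3 = 1 then e1 else e2) * ((j:ZMod p))⁻¹
        = e2 * ((j:ZMod p))⁻¹ := by
    intro j hj; simp only [Finset.mem_filter] at hj
    rw [if_neg (by omega), if_neg (by omega)]
  rw [Finset.sum_congr rfl c0, Finset.sum_congr rfl c1, Finset.sum_congr rfl c2,
    ← Finset.mul_sum, ← Finset.mul_sum, ← Finset.mul_sum]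
  ring

lemma key_K [hp : Fact p.Prime] (hp3 : 3 < p) (Q : ℤ) (hQ : (3:ℤ)^(p-1) = 1 + p * Q) :
    (((∑ j ∈ Ico 1 p, cc p j * eps (p-1-j)
        - ∑ j ∈ Ico 1 p, cc p j * (if 3*j ≤ p-1 then eps (p-1-3*j) else 0) : ℤ)) : ZMod p)
      = ((Q * eps (p-1) : ℤ) : ZMod p) := by
  have hmod3 : p % 3 = 1 ∨ p % 3 = 2 := by
    have : ¬ (3 ∣ p) := by
      intro h
      have := (Nat.prime_dvd_prime_iff_eq (by norm_num) hp.out).mp h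
      omega
    omega
  have h3K : ((3:ℕ) : ZMod p) ≠ 0 := by
    rw [Ne, ZMod.natCast_eq_zero_iff]
    intro h; have := Nat.le_of_dvd (by omega) h; omega
  have hg := glaisher hp3 Q hQ
  have h3inv : (3:ZMod p) * (3:ZMod p)⁻¹ = 1 := mul_inv_cancel₀ (by exact_mod_cast h3K)
  set x := ∑ j ∈ Ico 1 ((p-1)/3 + 1), ((j : ZMod p))⁻¹ with hx
  push_cast
  -- Z3 part
  have hZ3 : ∑ j ∈ Ico 1 p, ((cc p j : ℤ) : ZMod p) * (if 3*j ≤ p-1 then ((eps (p-1-3*j) : ℤ) : ZMod p) else 0)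
      = ((eps (p-1) : ℤ) : ZMod p) * x := by
    have h1 : ∀ j ∈ Ico 1 p, ((cc p j : ℤ):ZMod p) * (if 3*j ≤ p-1 then ((eps (p-1-3*j) : ℤ) : ZMod p) else 0)
        = if 3*j ≤ p-1 then ((eps (p-1) : ℤ):ZMod p) * ((j:ZMod p))⁻¹ else 0 := by
      intro j hj
      rw [cc_K hp3 j hj]
      split_ifs with h
      · have he : eps (p-1-3*j) = eps (p-1) := by
          unfold eps
          rw [show (p-1-3*j) % 3 = (p-1) % 3 by omega]
        rw [he]; ring
      · push_cast; ring
    rw [Finset.sum_congr rfl h1, ← Finset.sum_filter,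
      show (Ico 1 p).filter (fun j => 3*j ≤ p-1) = Ico 1 ((p-1)/3+1) by
        ext j; simp only [Finset.mem_filter, Finset.mem_Ico]; omega,
      ← Finset.mul_sum]
  rw [hZ3]
  -- Z1 part : case split
  rcases hmod3 with h3 | h3
  · -- p % 3 = 1 : weights e0=1, e1=0, e2=-1 ; eps(p-1)=1
    have hZ1 : ∑ j ∈ Ico 1 p, ((cc p j : ℤ) : ZMod p) * ((eps (p-1-j) : ℤ) : ZMod p)
        = ∑ j ∈ Ico 1 p, (if j % 3 = 0 then (1:ZMod p) else if j % 3 = 1 then 0 else -1) * ((j:ZMod p))⁻¹ := by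
      refine Finset.sum_congr rfl fun j hj => ?_
      rw [cc_K hp3 j hj]
      simp only [Finset.mem_Ico] at hj
      rcases (by omega : j % 3 = 0 ∨ j % 3 = 1 ∨ j % 3 = 2) with h | h | h
      · rw [if_pos h, show eps (p-1-j) = 1 by unfold eps; rw [if_pos (by omega)]]
        push_cast; ring
      · rw [if_neg (by omega), if_pos h,
          show eps (p-1-j) = 0 by unfold eps; rw [if_neg (by omega), if_neg (by omega)]]
        push_cast; ring
      · rw [if_neg (by omega), if_neg (by omega),
          show eps (p-1-j) = -1 by unfold eps; rw [if_neg (by omega), if_pos (by omega)]]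
        push_cast; ring
    rw [hZ1, sum_classes, class0_eq hp3,
      class_refl_zero hp3 2 (fun j h1 h2 => by omega),
      show eps (p-1) = 1 by unfold eps; rw [if_pos (by omega)]]
    push_cast
    linear_combination (-(3:ZMod p)⁻¹) * hg + (x + (Q:ZMod p)) * h3inv
  · -- p % 3 = 2 : weights e0=-1, e1=1, e2=0 ; eps(p-1)=-1
    have hZ1 : ∑ j ∈ Ico 1 p, ((cc p j : ℤ) : ZMod p) * ((eps (p-1-j) : ℤ) : ZMod p)
        = ∑ j ∈ Ico 1 p, (if j % 3 = 0 then (-1:ZMod p) else if j % 3 = 1 then 1 else 0) * ((j:ZMod p))⁻¹ := by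
      refine Finset.sum_congr rfl fun j hj => ?_
      rw [cc_K hp3 j hj]
      simp only [Finset.mem_Ico] at hj
      rcases (by omega : j % 3 = 0 ∨ j % 3 = 1 ∨ j % 3 = 2) with h | h | h
      · rw [if_pos h, show eps (p-1-j) = -1 by unfold eps; rw [if_neg (by omega), if_pos (by omega)]]
        push_cast; ring
      · rw [if_neg (by omega), if_pos h,
          show eps (p-1-j) = 1 by unfold eps; rw [if_pos (by omega)]]
        push_cast; ring
      · rw [if_neg (by omega), if_neg (by omega),
          show eps (p-1-j) = 0 by unfold eps; rw [if_neg (by omega), if_neg (by omega)]]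
        push_cast; ring
    rw [hZ1, sum_classes, class0_eq hp3,
      class_refl_zero hp3 1 (fun j h1 h2 => by omega),
      show eps (p-1) = -1 by unfold eps; rw [if_neg (by omega), if_pos (by omega)]]
    push_cast
    linear_combination ((3:ZMod p)⁻¹) * hg + (-x - (Q:ZMod p)) * h3inv


end Aux

theorem stmt_18 (p : ℕ) [Fact p.Prime] (hp : 3 < p) :
    T (p - 1) ≡ 3 ^ (p - 1) * legendreSym 3 p [ZMOD ((p : ℤ) ^ 2)] := by
  have hprime : p.Prime := Fact.out
  have hmodeq : ((p:ℤ)^2) = ((p^2 : ℕ) : ℤ) := by push_cast; ring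
  rw [hmodeq, ← ZMod.intCast_eq_intCast_iff]
  -- Fermat quotient
  have h3K : ((3:ℤ) : ZMod p) ≠ 0 := by
    have : ((3:ℕ) : ZMod p) ≠ 0 := by
      rw [Ne, ZMod.natCast_eq_zero_iff]
      intro h; have := Nat.le_of_dvd (by omega) h; omega
    exact_mod_cast this
  have hQdvd : (p:ℤ) ∣ 3^(p-1) - 1 := by
    have hf : ((3: ZMod p))^(p-1) = 1 := ZMod.pow_card_sub_one_eq_one (by exact_mod_cast h3K)
    have : (((3:ℤ)^(p-1) - 1 : ℤ) : ZMod p) = 0 := by push_cast; rw [hf]; ring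
    exact_mod_cast (ZMod.intCast_zmod_eq_zero_iff_dvd _ p).mp this
  obtain ⟨Q, hQ0⟩ := hQdvd
  have hQ : (3:ℤ)^(p-1) = 1 + p * Q := by linarith
  -- coefficient identity over ℤ
  set Y := (qq^(p-1) * qq * GG p * MM p).coeff (p-1) with hYdef
  set Z1 := ∑ j ∈ Ico 1 p, cc p j * eps (p-1-j) with hZ1def
  set Z3 := ∑ j ∈ Ico 1 p, cc p j * (if 3*j ≤ p-1 then eps (p-1-3*j) else 0) with hZ3def
  have hT : T (p-1) = eps (p-1) - p * Z3 + p * Y := by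
    rw [← T_eq_coeff, coeff_extract hprime hp, Z3_eq hprime hp]
  have hYZ : ((p * Y : ℤ) : ZMod (p^2)) = ((p * Z1 : ℤ) : ZMod (p^2)) := by
    apply A2 hprime
    rw [hYdef, hZ1def, ← Z1_eq hprime hp]
    exact Y_modp hp
  have hkey : ((p * (Z1 - Z3) : ℤ) : ZMod (p^2)) = ((p * (Q * eps (p-1)) : ℤ) : ZMod (p^2)) :=
    A2 hprime _ _ (key_K hp Q hQ)
  have hleg : (legendreSym 3 (p : ℤ) : ℤ) = eps (p-1) := legendre_eq hp
  rw [hT, hleg]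
  have lhs_eq : ((eps (p-1) - p * Z3 + p * Y : ℤ) : ZMod (p^2))
      = ((eps (p-1) : ℤ) : ZMod (p^2)) + ((p * (Z1 - Z3) : ℤ) : ZMod (p^2))
        + (((p * Y : ℤ) : ZMod (p^2)) - ((p * Z1 : ℤ) : ZMod (p^2))) := by
    push_cast; ring
  rw [lhs_eq, hYZ, hkey]
  have : ((3:ℤ)^(p-1) * eps (p-1)) = eps (p-1) + p * (Q * eps (p-1)) := by
    rw [hQ]; ring
  rw [this]
  push_cast
  ring
end
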